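/- (Twist of the rotated cluster variable σ²(A) in Gr(3,8), used in Section 8.1.) For all vectors v₁,…,v₈ ∈ ℝ³, set w_i := v_{i+1}×v_{i+2} with indices taken modulo 8 in {1,…,8}, and write Δ_{abc} := det(v_a,v_b,v_c) and T_{abc} := det(w_a,w_b,w_c). Then T_{356}·T_{247}·T_{138} − T_{356}·T_{347}·T_{128} − T_{237}·T_{456}·T_{138} = Δ₁₂₃·Δ₃₄₅·Δ₄₅₆·Δ₆₇₈·det(v₈×v₁, v₂×v₄, v₅×v₇). That is, T*(σ²(A)) = Δ₁₂₃Δ₃₄₅Δ₄₅₆Δ₆₇₈·Y^{124578}. -/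

import Mathlib

/-- Determinant of the 3×3 real matrix with columns `a`, `b`, `c`. -/
noncomputable def det3 (a b c : Fin 3 → ℝ) : ℝ :=
  (Matrix.of ![a, b, c]).transpose.det

/-- The standard cross product on `ℝ³`. -/
def cross (a b : Fin 3 → ℝ) : Fin 3 → ℝ := crossProduct a b

/-!
Consecutive twisted vectors share a factor, `w_i = v_{i+1} × v_{i+2}` and
`w_{i+1} = v_{i+2} × v_{i+3}`, and `(a × b) × (b × c) = det(a, b, c) b`; this evaluates
`T₃₅₆, T₁₂₈, T₁₃₈, T₄₅₆` as products of two minors. The Grassmann–Plücker relation among four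
vectors of `ℝ³`, crossed with one of them, writes `v₂ × v₄` and `v₅ × v₇` through `w₂, w₃` and
`w₃, w₄`; by bilinearity this turns `Δ₃₄₅ Δ₄₅₆ Y^{124578}` into a combination of `T₂₄₇, T₂₃₇, T₃₄₇`,
and what remains is a polynomial identity.
-/

section

variable (a b c d e f p : Fin 3 → ℝ)

theorem det3_eq_dotProduct_cross : det3 a b c = a ⬝ᵥ cross b c := by
  rw [det3, Matrix.det_transpose, cross, triple_product_eq_det]
  rfl

theorem det3_rotate : det3 a b c = det3 b c a := by
  simp only [det3_eq_dotProduct_cross, cross, triple_product_permutation a]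

theorem det3_cross_cross_cross_shared :
    det3 (cross a b) (cross b c) (cross d e) = det3 a b c * det3 b d e := by
  rw [← det3_rotate]
  simp only [det3_eq_dotProduct_cross, cross, cross_cross_eq_smul_sub_smul, dot_self_cross,
    zero_smul, sub_zero, dotProduct_smul, smul_eq_mul]
  rw [dotProduct_comm b, mul_comm]

theorem det3_smul_sub_smul_add_smul_sub_smul :
    det3 b c d • a - det3 a c d • b + det3 a b d • c - det3 a b c • d = 0 := by
  ext i
  fin_cases i <;>
  · simp only [det3, Matrix.det_transpose, Matrix.det_fin_three, Matrix.of_apply,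
      Matrix.cons_val', Matrix.cons_val_fin_one, Matrix.cons_val_zero, Matrix.cons_val_one,
      Matrix.cons_val, Fin.zero_eta, Fin.mk_one, Fin.reduceFinMk, Fin.isValue, Pi.sub_apply,
      Pi.add_apply, Pi.smul_apply, smul_eq_mul, Pi.zero_apply]
    ring

theorem det3_smul_cross_skip_left :
    det3 b c d • cross a c = det3 a c d • cross b c - det3 a b c • cross c d := by
  have h := congrArg (fun x => crossProduct x c) (det3_smul_sub_smul_add_smul_sub_smul a b c d)
  simp only [map_sub, map_add, map_smul, LinearMap.sub_apply, LinearMap.add_apply,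
    LinearMap.smul_apply, cross_self, smul_zero, add_zero, map_zero, LinearMap.zero_apply] at h
  rw [← cross_anticomm c d] at h
  simp only [cross]
  linear_combination (norm := module) h

theorem det3_smul_cross_skip_right :
    det3 a b c • cross b d = det3 a b d • cross b c - det3 b c d • cross a b := by
  have h := congrArg (crossProduct b) (det3_smul_sub_smul_add_smul_sub_smul a b c d)
  simp only [map_sub, map_add, map_smul, cross_self, smul_zero, sub_zero, map_zero] at h
  rw [← cross_anticomm a b] at h
  simp only [cross]
  linear_combination (norm := module) -h

theorem det3_cross_skip_cross_skip :
    det3 b c d * det3 c d e * det3 (cross a c) (cross d f) p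
      = det3 a c d * det3 c d f * det3 (cross b c) (cross d e) p
        - det3 a c d * det3 d e f * det3 (cross b c) (cross c d) p
        - det3 a b c * det3 c d f * det3 (cross c d) (cross d e) p := by
  have hdet (x y : Fin 3 → ℝ) : det3 x y p = p ⬝ᵥ crossProduct x y := by
    rw [← det3_rotate, det3_eq_dotProduct_cross, cross]
  calc det3 b c d * det3 c d e * det3 (cross a c) (cross d f) p
      = det3 (det3 b c d • cross a c) (det3 c d e • cross d f) p := by
        simp only [hdet, map_smul, LinearMap.smul_apply, dotProduct_smul, smul_eq_mul]; ring
    _ = det3 (det3 a c d • cross b c - det3 a b c • cross c d)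
          (det3 c d f • cross d e - det3 d e f • cross c d) p := by
        rw [det3_smul_cross_skip_left, det3_smul_cross_skip_right c d e f]
    _ = _ := by
        simp only [hdet, map_sub, map_smul, LinearMap.sub_apply, LinearMap.smul_apply,
          dotProduct_sub, dotProduct_smul, smul_eq_mul, cross_self, dotProduct_zero]
        ring

end

/-- Twist of the rotated Gr(3,8) cluster variable `σ²(A)`:
`T*(σ²(A)) = Δ₁₂₃Δ₃₄₅Δ₄₅₆Δ₆₇₈ · Y^{124578}`. -/
theorem twist_of_sigma2_A (v₁ v₂ v₃ v₄ v₅ v₆ v₇ v₈ w₁ w₂ w₃ w₄ w₅ w₆ w₇ w₈ : Fin 3 → ℝ)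
    (hw₁ : w₁ = cross v₂ v₃) (hw₂ : w₂ = cross v₃ v₄) (hw₃ : w₃ = cross v₄ v₅)
    (hw₄ : w₄ = cross v₅ v₆) (hw₅ : w₅ = cross v₆ v₇) (hw₆ : w₆ = cross v₇ v₈)
    (hw₇ : w₇ = cross v₈ v₁) (hw₈ : w₈ = cross v₁ v₂) :
    det3 w₃ w₅ w₆ * det3 w₂ w₄ w₇ * det3 w₁ w₃ w₈
      - det3 w₃ w₅ w₆ * det3 w₃ w₄ w₇ * det3 w₁ w₂ w₈
      - det3 w₂ w₃ w₇ * det3 w₄ w₅ w₆ * det3 w₁ w₃ w₈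
    = det3 v₁ v₂ v₃ * det3 v₃ v₄ v₅ * det3 v₄ v₅ v₆ * det3 v₆ v₇ v₈
        * det3 (cross v₈ v₁) (cross v₂ v₄) (cross v₅ v₇) := by
  have hT₃₅₆ : det3 w₃ w₅ w₆ = det3 v₆ v₇ v₈ * det3 v₄ v₅ v₇ := by
    rw [hw₃, hw₅, hw₆, det3_rotate, det3_cross_cross_cross_shared, det3_rotate v₇]
  have hT₁₂₈ : det3 w₁ w₂ w₈ = det3 v₂ v₃ v₄ * det3 v₁ v₂ v₃ := by
    rw [hw₁, hw₂, hw₈, det3_cross_cross_cross_shared, det3_rotate v₃]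
  have hT₁₃₈ : det3 w₁ w₃ w₈ = det3 v₁ v₂ v₃ * det3 v₂ v₄ v₅ := by
    rw [hw₁, hw₃, hw₈, ← det3_rotate, det3_cross_cross_cross_shared]
  have hT₄₅₆ : det3 w₄ w₅ w₆ = det3 v₅ v₆ v₇ * det3 v₆ v₇ v₈ := by
    rw [hw₄, hw₅, hw₆, det3_cross_cross_cross_shared]
  have hY : det3 v₃ v₄ v₅ * det3 v₄ v₅ v₆ * det3 (cross v₈ v₁) (cross v₂ v₄) (cross v₅ v₇)
      = det3 v₂ v₄ v₅ * det3 v₄ v₅ v₇ * det3 w₂ w₄ w₇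
        - det3 v₂ v₄ v₅ * det3 v₅ v₆ v₇ * det3 w₂ w₃ w₇
        - det3 v₂ v₃ v₄ * det3 v₄ v₅ v₇ * det3 w₃ w₄ w₇ := by
    rw [hw₂, hw₃, hw₄, hw₇, det3_rotate (cross v₈ v₁)]
    exact det3_cross_skip_cross_skip v₂ v₃ v₄ v₅ v₆ v₇ (cross v₈ v₁)
  rw [hT₃₅₆, hT₁₂₈, hT₁₃₈, hT₄₅₆]
  linear_combination -(det3 v₁ v₂ v₃ * det3 v₆ v₇ v₈) * hY
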